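/- Right application is compatible with composition up to failures equivalence: ((P ; Q) | R⟩ ≈_f (P | (Q | R⟩⟩ for all processes P, Q, R. -/

import Mathlib

set_option linter.unnecessarySeqFocus false

/-! # CCS with simultaneous actions (Abramsky, "Process Realizability") -/

/-- Labels: names (`inl`) and co-names (`inr`). -/
abbrev Label : Type := ℕ ⊕ ℕ

/-- The involution `λ ↦ λ̄` exchanging names and co-names. -/
def Label.bar : Label → Label
  | .inl n => .inr n
  | .inr n => .inl n

/-- Actions: finite sets of labels, performed simultaneously.  `τ = ∅`. -/
abbrev Act : Type := Finset Label

/-- A renaming: a partial injective function on labels preserving the involution. -/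
structure Renaming where
  toFun : Label → Option Label
  inj : ∀ ⦃x y z : Label⦄, toFun x = some z → toFun y = some z → x = y
  bar : ∀ x : Label, toFun (Label.bar x) = (toFun x).map Label.bar

/-- The pointwise extension of a renaming to actions. -/
def Renaming.onAction (f : Renaming) (a : Act) : Act :=
  a.filterMap f.toFun (fun _ _ _ hx hy => f.inj (Option.mem_def.mp hx) (Option.mem_def.mp hy))

/-- Guarded process terms of CCS with simultaneous actions:
prefix, countably-indexed guarded sums (all guards non-`τ`), parallel composition,
restriction, renaming, process variables (de Bruijn) and recursion. -/
inductive Proc : Type where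
  | pre (a : Act) (P : Proc)
  | sum (I : Set ℕ) (act : ℕ → Act) (cont : ℕ → Proc) (hg : ∀ n ∈ I, (act n).Nonempty)
  | par (P Q : Proc)
  | restrict (P : Proc) (L : Set Label)
  | rename (P : Proc) (f : Renaming)
  | var (n : ℕ)
  | fix (P : Proc)

/-- The inactive process `0` (the empty sum). -/
def Proc.nil : Proc := .sum ∅ (fun _ => ∅) (fun _ => .var 0) (by simp)

/-- Substitution of a process for the variable with de Bruijn index `d`. -/
def Proc.subst (R : Proc) : ℕ → Proc → Proc
  | d, .pre a P => .pre a (Proc.subst R d P)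
  | d, .sum I act cont hg => .sum I act (fun n => Proc.subst R d (cont n)) hg
  | d, .par P Q => .par (Proc.subst R d P) (Proc.subst R d Q)
  | d, .restrict P L => .restrict (Proc.subst R d P) L
  | d, .rename P f => .rename (Proc.subst R d P) f
  | d, .var n => if n = d then R else .var n
  | d, .fix P => .fix (Proc.subst R (d + 1) P)

/-- The labelled transition relation, with the generalized synchronization rule
for simultaneous (compound) actions. -/
inductive Step : Proc → Act → Proc → Prop where
  | pre {a P} : Step (.pre a P) a P
  | sum {I act cont hg} (j : ℕ) (hj : j ∈ I) : Step (.sum I act cont hg) (act j) (cont j)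
  | restrict {P a Q L} : Step P a Q → (∀ l ∈ a, l ∉ L ∧ Label.bar l ∉ L) →
      Step (.restrict P L) a (.restrict Q L)
  | rename {P a Q} {f : Renaming} : Step P a Q → (∀ l ∈ a, (f.toFun l).isSome) →
      Step (.rename P f) (f.onAction a) (.rename Q f)
  | fix {P a Q} : Step (Proc.subst (.fix P) 0 P) a Q → Step (.fix P) a Q
  | parL {P a P' Q} : Step P a P' → Step (.par P Q) a (.par P' Q)
  | parR {P Q a Q'} : Step Q a Q' → Step (.par P Q) a (.par P Q')
  | sync {P Q P' Q' a b c} : Step P (a ∪ b) P' → Step Q (b.image Label.bar ∪ c) Q' →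
      Disjoint a b → Disjoint (b.image Label.bar) c → Disjoint a c →
      Step (.par P Q) (a ∪ c) (.par P' Q')

/-- Zero or more silent (`τ`) transitions. -/
def TauStar : Proc → Proc → Prop :=
  Relation.ReflTransGen (fun P Q => Step P ∅ Q)

/-- Observable transition `P ⟹a Q`: `τ* a τ*`. -/
def Obs (P : Proc) (a : Act) (Q : Proc) : Prop :=
  ∃ P₁ P₂, TauStar P P₁ ∧ Step P₁ a P₂ ∧ TauStar P₂ Q

/-- Observable transitions along a string of (non-`τ`) actions. -/
inductive ObsSeq : Proc → List Act → Proc → Prop where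
  | nil {P Q} : TauStar P Q → ObsSeq P [] Q
  | cons {P a Q s R} : Obs P a Q → ObsSeq Q s R → ObsSeq P (a :: s) R

/-- The failures of a process: pairs `(s, X)` with `s` a string of nonempty actions and
`X` a set of nonempty actions such that `P ⟹s Q` for some `Q` refusing every action of `X`. -/
def failures (P : Proc) : Set (List Act × Set Act) :=
  { sX | (∀ a ∈ sX.1, a.Nonempty) ∧ (∀ a ∈ sX.2, a.Nonempty) ∧
      ∃ Q, ObsSeq P sX.1 Q ∧ ∀ a ∈ sX.2, ¬∃ R, Obs Q a R }

/-- Failures equivalence. -/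
def FailEq (P Q : Proc) : Prop := failures P = failures Q

/-- Weak simulations (with respect to the observable transitions). -/
def IsWeakSim (R : Proc → Proc → Prop) : Prop :=
  ∀ ⦃P Q⦄, R P Q →
    (∀ P', TauStar P P' → ∃ Q', TauStar Q Q' ∧ R P' Q') ∧
    (∀ a P', (a : Act).Nonempty → Obs P a P' → ∃ Q', Obs Q a Q' ∧ R P' Q')

/-- Weak bisimilarity. -/
def WeakBisim (P Q : Proc) : Prop :=
  ∃ R : Proc → Proc → Prop, IsWeakSim R ∧ IsWeakSim (fun x y => R y x) ∧ R P Q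
/-! ## The split name space and the basic combinators -/

/-- Build a bar-preserving partial injective renaming from a partial injective map on names. -/
def Renaming.ofNameFun (f : ℕ → Option ℕ)
    (hf : ∀ ⦃x y z : ℕ⦄, f x = some z → f y = some z → x = y) : Renaming where
  toFun := fun l =>
    match l with
    | .inl n => (f n).map .inl
    | .inr n => (f n).map .inr
  inj := by
    rintro (x | x) (y | y) (z | z) hx hy <;>
      simp only [Option.map_eq_some_iff] at hx hy <;>
      obtain ⟨a, ha, ha'⟩ := hx <;> obtain ⟨b, hb, hb'⟩ := hy <;>
        solve
          | (cases ha'; cases hb'; exact congrArg _ (hf ha hb))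
          | (cases hb')
          | (cases ha')
  bar := by
    rintro (n | n) <;> cases hf : f n <;> simp [Label.bar, hf]

/-- The underlying name of a label. -/
def Label.name : Label → ℕ := Sum.elim id id

/-- The injection `l` of the name space onto its "left" half (even names). -/
def lRen : Renaming := Renaming.ofNameFun (fun n => some (2 * n)) (by intro x y z hx hy; simp only [Option.some.injEq] at hx hy; omega)

/-- The injection `r` of the name space onto its "right" half (odd names). -/
def rRen : Renaming := Renaming.ofNameFun (fun n => some (2 * n + 1)) (by intro x y z hx hy; simp only [Option.some.injEq] at hx hy; omega)

/-- The partial inverse `l⁻¹` of `l`. -/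
def lInv : Renaming :=
  Renaming.ofNameFun (fun n => if n % 2 = 0 then some (n / 2) else none)
    (by intro x y z hx hy; try dsimp only at hx hy
        split at hx <;> split at hy <;> simp_all <;> omega)

/-- The partial inverse `r⁻¹` of `r`. -/
def rInv : Renaming :=
  Renaming.ofNameFun (fun n => if n % 2 = 1 then some (n / 2) else none)
    (by intro x y z hx hy; try dsimp only at hx hy
        split at hx <;> split at hy <;> simp_all <;> omega)

/-- The left half `ℒ_l` of the label space. -/
def LabL : Set Label := {x | x.name % 2 = 0}

/-- The right half `ℒ_r` of the label space. -/
def LabR : Set Label := {x | x.name % 2 = 1}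

/-- Tensor product: disjoint (non-communicating) parallel composition `P[l] | Q[r]`. -/
def tensor (P Q : Proc) : Proc := .par (P.rename lRen) (Q.rename rRen)

/-- Left (forwards) application `⟨Q | P⟩ = ((Q[l] | P) ∖ ℒ_l)[r⁻¹]`. -/
def lapp (Q P : Proc) : Proc := ((Proc.par (Q.rename lRen) P).restrict LabL).rename rInv

/-- Right (reverse) application `(P | R⟩ = ((P | R[r]) ∖ ℒ_r)[l⁻¹]`. -/
def rapp (P R : Proc) : Proc := ((Proc.par P (R.rename rRen)).restrict LabR).rename lInv

/-! ### The three-fold decomposition `𝒩 = 𝒩₁ ∪̇ 𝒩₂ ∪̇ 𝒩₃` and composition -/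

/-- `φ₁₂ : 𝒩 ≅ 𝒩₁ ∪̇ 𝒩₂` (`𝒩ᵢ` = names `≡ i - 1 (mod 3)`), carrying `𝒩_l` onto `𝒩₁`, `𝒩_r` onto `𝒩₂`. -/
def phi12 : Renaming :=
  Renaming.ofNameFun (fun n => some (if n % 2 = 0 then 3 * (n / 2) else 3 * (n / 2) + 1))
    (by intro x y z hx hy; try dsimp only at hx hy
        simp only [Option.some.injEq] at hx hy
        split at hx <;> split at hy <;> omega)

/-- `φ₂₃ : 𝒩 ≅ 𝒩₂ ∪̇ 𝒩₃`, carrying `𝒩_l` onto `𝒩₂`, `𝒩_r` onto `𝒩₃`. -/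
def phi23 : Renaming :=
  Renaming.ofNameFun (fun n => some (if n % 2 = 0 then 3 * (n / 2) + 1 else 3 * (n / 2) + 2))
    (by intro x y z hx hy; try dsimp only at hx hy
        simp only [Option.some.injEq] at hx hy
        split at hx <;> split at hy <;> omega)

/-- The partial inverse `φ₁₃⁻¹` of `φ₁₃ : 𝒩 ≅ 𝒩₁ ∪̇ 𝒩₃`. -/
def phi13Inv : Renaming :=
  Renaming.ofNameFun
    (fun n => if n % 3 = 0 then some (2 * (n / 3)) else if n % 3 = 2 then some (2 * (n / 3) + 1) else none)
    (by intro x y z hx hy; try dsimp only at hx hy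
        split at hx <;> split at hy <;> simp_all <;> omega)

/-- The middle part `𝒩₂` of the label space (as a set of labels). -/
def Lab2 : Set Label := {x | x.name % 3 = 1}

/-- Composition `P ; Q = ((P[φ₁₂] | Q[φ₂₃]) ∖ 𝒩₂)[φ₁₃⁻¹]`. -/
def comp (P Q : Proc) : Proc :=
  ((Proc.par (P.rename phi12) (Q.rename phi23)).restrict Lab2).rename phi13Inv

/-! ### The identity (wire) process -/

/-- The identity process `I = rec X. Σ_{a ∈ Act₊} (l(a) ∪ r(a)‾).X`. -/
noncomputable def Iproc : Proc :=
  .fix (.sum {n | ∃ a : Act, (Encodable.decode n : Option Act) = some a ∧ a.Nonempty}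
    (fun n =>
      match (Encodable.decode n : Option Act) with
      | some a => lRen.onAction a ∪ (rRen.onAction a).image Label.bar
      | none => {Sum.inl 0})
    (fun _ => .var 0)
    (by rintro n ⟨a, ha, hne⟩
        simp only [ha]
        obtain ⟨x, hx⟩ := hne
        refine Finset.Nonempty.mono Finset.subset_union_left ⟨(Sum.map (2 * ·) (2 * ·)) x, ?_⟩
        simp only [Renaming.onAction, Finset.mem_filterMap]
        exact ⟨x, hx, by cases x <;> rfl⟩))

/-! ## Guarded choice combinators, the additive pairing and injections, `!P`, divergence -/

/-- Binary guarded sum `a.P + b.Q` (guards must be non-`τ`). -/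
def gsum2 (a : Act) (P : Proc) (b : Act) (Q : Proc) (ha : a.Nonempty) (hb : b.Nonempty) : Proc :=
  .sum {0, 1} (fun n => if n = 0 then a else b) (fun n => if n = 0 then P else Q)
    (by intro n _; (try dsimp only); split <;> assumption)

/-- Ternary guarded sum `a.P + b.Q + c.R`. -/
def gsum3 (a : Act) (P : Proc) (b : Act) (Q : Proc) (c : Act) (R : Proc)
    (ha : a.Nonempty) (hb : b.Nonempty) (hc : c.Nonempty) : Proc :=
  .sum {0, 1, 2} (fun n => if n = 0 then a else if n = 1 then b else c)
    (fun n => if n = 0 then P else if n = 1 then Q else R)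
    (by intro n _; (try dsimp only); split <;> [skip; split] <;> assumption)

/-- The distinguished names: `α = 0`, `β = 1`, `ω = 2`, `δ = 3`, `γ = 4`, `σ = 5`. -/
def αAct : Act := {Sum.inl 0}
def βAct : Act := {Sum.inl 1}
def αBar : Act := {Sum.inr 0}
def βBar : Act := {Sum.inr 1}
def ωAct : Act := {Sum.inl 2}
def δBar : Act := {Sum.inr 3}
def γBar : Act := {Sum.inr 4}

/-- The additive pairing `⟨P, Q⟩ = r(α).P + r(β).Q`  (`r(α) = 1`, `r(β) = 3`). -/
def pairR (P Q : Proc) : Proc :=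
  gsum2 {Sum.inl 1} P {Sum.inl 3} Q (Finset.singleton_nonempty _) (Finset.singleton_nonempty _)

/-- The plain additive pairing `α.P + β.Q` used in the realizability clauses for `&`. -/
def pairProc (P Q : Proc) : Proc :=
  gsum2 αAct P βAct Q (Finset.singleton_nonempty _) (Finset.singleton_nonempty _)

/-- The left injection `l(P) = l(α)‾.P`  (`l(α) = 0`). -/
def injl (P : Proc) : Proc := .pre {Sum.inr 0} P

/-- The right injection `r(Q) = r(β)‾.Q`  (`r(β) = 3`). -/
def injr (Q : Proc) : Proc := .pre {Sum.inr 3} Q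

/-- The exponential combinator `!P = rec X.(ω.0 + δ.P + γ.(X[l] | X[r]))`. -/
def bangProc (P : Proc) : Proc :=
  .fix (gsum3 ωAct Proc.nil ({Sum.inl 3} : Act) P ({Sum.inl 4} : Act)
    (.par (Proc.rename (.var 0) lRen) (Proc.rename (.var 0) rRen))
    (Finset.singleton_nonempty _) (Finset.singleton_nonempty _) (Finset.singleton_nonempty _))

/-- `P` diverges if there is an infinite sequence of `τ`-transitions from `P`. -/
def Diverges (P : Proc) : Prop :=
  ∃ f : ℕ → Proc, f 0 = P ∧ ∀ n, Step (f n) ∅ (f (n + 1))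

/-- `P ⊥ Q`: closing the system, `P` and `Q` interacting with each other yield no divergence. -/
def Orth (P Q : Proc) : Prop := ¬ Diverges ((Proc.par P Q).restrict Set.univ)

/-!
Both sides make exactly the same transitions, indexed by moves of `P`, `Q` and `R`: each component
either steps or idles (at least one steps), the right interface of `P` synchronises with the left
interface of `Q`, the right interface of `Q` synchronises with `R`, and the visible action is what
`P` shows on its left interface. In each application and composition the restriction to the hidden
names leaves no choice for the synchronisation set, so this description is exact on both sides.
Hence the pairs `(((P ; Q) | R⟩, (P | (Q | R⟩⟩)` form a strong bisimulation, and strongly bisimilar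
processes have the same failures.
-/

def IsStrongSim (R : Proc → Proc → Prop) : Prop :=
  ∀ ⦃X Y⦄, R X Y → ∀ ⦃a X'⦄, Step X a X' → ∃ Y', Step Y a Y' ∧ R X' Y'

namespace IsStrongSim

variable {R : Proc → Proc → Prop}

lemma tauStar (hR : IsStrongSim R) {X Y X'} (h : R X Y) (hX : TauStar X X') :
    ∃ Y', TauStar Y Y' ∧ R X' Y' := by
  induction hX with
  | refl => exact ⟨Y, .refl, h⟩
  | tail _ hstep ih =>
    obtain ⟨Y₁, hY₁, h₁⟩ := ih
    obtain ⟨Y₂, hY₂, h₂⟩ := hR h₁ hstep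
    exact ⟨Y₂, hY₁.tail hY₂, h₂⟩

lemma obs (hR : IsStrongSim R) {X Y a X'} (h : R X Y) (hX : Obs X a X') :
    ∃ Y', Obs Y a Y' ∧ R X' Y' := by
  obtain ⟨X₁, X₂, h₁, h₂, h₃⟩ := hX
  obtain ⟨Y₁, hY₁, hR₁⟩ := hR.tauStar h h₁
  obtain ⟨Y₂, hY₂, hR₂⟩ := hR hR₁ h₂
  obtain ⟨Y₃, hY₃, hR₃⟩ := hR.tauStar hR₂ h₃
  exact ⟨Y₃, ⟨Y₁, Y₂, hY₁, hY₂, hY₃⟩, hR₃⟩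

lemma obsSeq (hR : IsStrongSim R) {X s X'} (hX : ObsSeq X s X') :
    ∀ {Y}, R X Y → ∃ Y', ObsSeq Y s Y' ∧ R X' Y' := by
  induction hX with
  | nil hτ =>
    intro Y h
    obtain ⟨Y', hY', h'⟩ := hR.tauStar h hτ
    exact ⟨Y', .nil hY', h'⟩
  | cons ho _ ih =>
    intro Y h
    obtain ⟨Y₁, hY₁, h₁⟩ := hR.obs h ho
    obtain ⟨Y', hY', h'⟩ := ih h₁
    exact ⟨Y', .cons hY₁ hY', h'⟩

lemma failures_subset (hR : IsStrongSim R) (hR' : IsStrongSim (flip R)) {X Y} (h : R X Y) :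
    failures X ⊆ failures Y := by
  rintro ⟨s, refusals⟩ ⟨hs, hrefusals, X', hX', hrefuse⟩
  obtain ⟨Y', hY', h'⟩ := hR.obsSeq hX' h
  refine ⟨hs, hrefusals, Y', hY', fun a ha ⟨Y'', hY''⟩ => ?_⟩
  obtain ⟨X'', hX'', -⟩ := hR'.obs h' hY''
  exact hrefuse a ha ⟨X'', hX''⟩

end IsStrongSim

lemma failEq_of_isStrongSim {R : Proc → Proc → Prop} (hR : IsStrongSim R)
    (hR' : IsStrongSim (flip R)) {X Y} (h : R X Y) : FailEq X Y :=
  (hR.failures_subset hR' h).antisymm (hR'.failures_subset hR h)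

namespace Label

@[simp] lemma name_bar (l : Label) : l.bar.name = l.name := by cases l <;> rfl

def map (g : ℕ → ℕ) (l : Label) : Label := Sum.map g g l

@[simp] lemma name_map (g : ℕ → ℕ) (l : Label) : (l.map g).name = g l.name := by
  cases l <;> rfl

lemma map_injective {g : ℕ → ℕ} (hg : g.Injective) : (Label.map g).Injective :=
  Sum.map_injective.2 ⟨hg, hg⟩

lemma map_congr {g g' : ℕ → ℕ} {l : Label} (h : g l.name = g' l.name) : l.map g = l.map g' := by
  cases l <;> simpa [Label.map, Label.name] using h

lemma map_comp_map (g h : ℕ → ℕ) : Label.map g ∘ Label.map h = Label.map (g ∘ h) := by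
  ext (l | l) <;> rfl

lemma bar_comp_map (g : ℕ → ℕ) : Label.bar ∘ Label.map g = Label.map g ∘ Label.bar := by
  ext (l | l) <;> rfl

end Label

namespace Act

def evens (a : Act) : Act := a.filter (·.name % 2 = 0)

def odds (a : Act) : Act := a.filter (·.name % 2 = 1)

@[simp] lemma mem_evens {a : Act} {l : Label} : l ∈ a.evens ↔ l ∈ a ∧ l.name % 2 = 0 :=
  Finset.mem_filter

@[simp] lemma mem_odds {a : Act} {l : Label} : l ∈ a.odds ↔ l ∈ a ∧ l.name % 2 = 1 :=
  Finset.mem_filter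

@[simp] lemma evens_union (a b : Act) : (a ∪ b).evens = a.evens ∪ b.evens :=
  Finset.filter_union _ _ _

@[simp] lemma odds_union (a b : Act) : (a ∪ b).odds = a.odds ∪ b.odds :=
  Finset.filter_union _ _ _

@[simp] lemma evens_evens (a : Act) : a.evens.evens = a.evens := by ext; simp

@[simp] lemma odds_odds (a : Act) : a.odds.odds = a.odds := by ext; simp

@[simp] lemma evens_odds (a : Act) : a.odds.evens = ∅ := by ext; simp

@[simp] lemma odds_evens (a : Act) : a.evens.odds = ∅ := by ext; simp

lemma filter_image_map {a : Act} {g : ℕ → ℕ} {p q : Label → Prop} [DecidablePred p]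
    [DecidablePred q] (h : ∀ l, p (l.map g) ↔ q l) :
    (a.image (Label.map g)).filter p = (a.filter q).image (Label.map g) := by
  rw [Finset.filter_image]
  exact congrArg _ (Finset.filter_congr fun l _ => h l)

lemma image_map_eq_self {a : Act} {g : ℕ → ℕ} (h : ∀ l ∈ a, g l.name = l.name) :
    a.image (Label.map g) = a := by
  conv_rhs => rw [← Finset.image_id (s := a)]
  exact Finset.image_congr fun l hl =>
    (Label.map_congr (g' := id) (h l hl)).trans (by cases l <;> rfl)

end Act

namespace Renaming

lemma isSome_ofNameFun {f : ℕ → Option ℕ} {hf} {l : Label} :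
    ((ofNameFun f hf).toFun l).isSome = (f l.name).isSome := by
  cases l <;> simp [ofNameFun, Label.name]

lemma onAction_ofNameFun {f : ℕ → Option ℕ} {hf} {g : ℕ → ℕ} {a : Act}
    (h : ∀ l ∈ a, f l.name = some (g l.name)) :
    (ofNameFun f hf).onAction a = a.image (Label.map g) := by
  ext y
  simp only [onAction, Finset.mem_filterMap, Finset.mem_image]
  refine exists_congr fun x => and_congr_right fun hx => ?_
  have := h x hx
  cases x <;> simp_all [ofNameFun, Label.name, Label.map, eq_comm]

end Renaming

/-! ## Moves -/

def Move : Bool → Proc → Act → Proc → Prop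
  | true, P, a, P' => Step P a P'
  | false, P, a, P' => a = ∅ ∧ P' = P

lemma move_rename_iff {g : Bool} {P : Proc} {f : Renaming} {e : Act} {S : Proc} :
    Move g (P.rename f) e S ↔
      ∃ a P', Move g P a P' ∧ (∀ l ∈ a, (f.toFun l).isSome) ∧
        e = f.onAction a ∧ S = P'.rename f := by
  cases g
  · constructor
    · rintro ⟨rfl, rfl⟩
      exact ⟨∅, P, ⟨rfl, rfl⟩, by simp, rfl, rfl⟩
    · rintro ⟨a, P', ⟨rfl, rfl⟩, -, rfl, rfl⟩
      exact ⟨rfl, rfl⟩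
  · constructor
    · rintro (_ | _ | _ | @⟨_, a, P', _, h, hf⟩)
      exact ⟨a, P', h, hf, rfl, rfl⟩
    · rintro ⟨a, P', h, hf, rfl, rfl⟩
      exact .rename h hf

lemma move_restrict_iff {g : Bool} {P : Proc} {L : Set Label} {e : Act} {S : Proc} :
    Move g (P.restrict L) e S ↔
      ∃ P', Move g P e P' ∧ (∀ l ∈ e, l ∉ L ∧ l.bar ∉ L) ∧ S = P'.restrict L := by
  cases g
  · constructor
    · rintro ⟨rfl, rfl⟩
      exact ⟨P, ⟨rfl, rfl⟩, by simp, rfl⟩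
    · rintro ⟨P', ⟨rfl, rfl⟩, -, rfl⟩
      exact ⟨rfl, rfl⟩
  · constructor
    · rintro (_ | _ | @⟨_, _, P', _, h, hL⟩)
      exact ⟨P', h, hL, rfl⟩
    · rintro ⟨P', h, hL, rfl⟩
      exact .restrict h hL

lemma move_par_iff {g : Bool} {P Q : Proc} {e : Act} {S : Proc} :
    Move g (P.par Q) e S ↔
      ∃ gP gQ aP aQ P' Q', Move gP P aP P' ∧ Move gQ Q aQ Q' ∧ g = (gP || gQ) ∧
        (∃ b : Act, b ⊆ aP ∧ b.image Label.bar ⊆ aQ ∧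
          Disjoint (aP \ b) (aQ \ b.image Label.bar) ∧
          e = (aP \ b) ∪ (aQ \ b.image Label.bar)) ∧ S = P'.par Q' := by
  constructor
  · cases g
    · rintro ⟨rfl, rfl⟩
      exact ⟨false, false, ∅, ∅, P, Q, ⟨rfl, rfl⟩, ⟨rfl, rfl⟩, rfl, ⟨∅, by simp⟩, rfl⟩
    · rintro (_ | _ | _ | _ | _ | @⟨_, _, P', _, h⟩ | @⟨_, _, _, Q', h⟩ |
        @⟨_, _, P', Q', a, b, c, hP, hQ, hab, hbc, hac⟩)
      · exact ⟨true, false, e, ∅, P', Q, h, ⟨rfl, rfl⟩, rfl, ⟨∅, by simp⟩, rfl⟩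
      · exact ⟨false, true, ∅, e, P, Q', ⟨rfl, rfl⟩, h, rfl, ⟨∅, by simp⟩, rfl⟩
      · refine ⟨true, true, a ∪ b, b.image Label.bar ∪ c, P', Q', hP, hQ, rfl,
          ⟨b, Finset.subset_union_right, Finset.subset_union_left, ?_⟩, rfl⟩
        rw [Finset.union_sdiff_cancel_right hab, Finset.union_sdiff_cancel_left hbc]
        exact ⟨hac, rfl⟩
  · rintro ⟨gP, gQ, aP, aQ, P', Q', hP, hQ, rfl, ⟨b, hbP, hbQ, hdisj, rfl⟩, rfl⟩
    cases gP <;> cases gQ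
    · obtain ⟨⟨rfl, rfl⟩, rfl, rfl⟩ := And.intro hP hQ
      exact ⟨by simp, rfl⟩
    · obtain ⟨rfl, rfl⟩ := hP
      obtain rfl : b = ∅ := Finset.subset_empty.1 hbP
      simpa [Move] using Step.parR (P := P') hQ
    · obtain ⟨rfl, rfl⟩ := hQ
      obtain rfl : b = ∅ := by simpa using hbQ
      simpa [Move] using Step.parL (Q := Q') hP
    · refine Step.sync (b := b) ?_ ?_ Finset.sdiff_disjoint Finset.disjoint_sdiff hdisj
      · rwa [Finset.sdiff_union_of_subset hbP]
      · rwa [Finset.union_sdiff_of_subset hbQ]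

/-- If every label on which the two sides can synchronise is hidden, the restriction leaves no
choice for the synchronisation set `b`: it consists of all hidden labels on the left. -/
lemma exists_sync_iff {A B e : Act} {p : Label → Prop} [DecidablePred p]
    (hp : ∀ l, p l.bar ↔ p l) (hcross : ∀ l ∈ A, l.bar ∈ B → p l)
    (hdisj : Disjoint (A.filter (¬p ·)) (B.filter (¬p ·))) :
    (∃ b : Act, b ⊆ A ∧ b.image Label.bar ⊆ B ∧ Disjoint (A \ b) (B \ b.image Label.bar) ∧
        e = (A \ b) ∪ (B \ b.image Label.bar) ∧ ∀ l ∈ e, ¬p l) ↔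
      (A.filter p).image Label.bar = B.filter p ∧ e = A.filter (¬p ·) ∪ B.filter (¬p ·) := by
  constructor
  · rintro ⟨b, hbA, hbB, -, rfl, hvisible⟩
    have hbp : ∀ l ∈ b, p l := fun l hl =>
      hcross l (hbA hl) (hbB (Finset.mem_image_of_mem _ hl))
    have hb : b = A.filter p := by
      ext l
      refine ⟨fun hl => Finset.mem_filter.2 ⟨hbA hl, hbp l hl⟩, fun hl => ?_⟩
      obtain ⟨hlA, hlp⟩ := Finset.mem_filter.1 hl
      by_contra hlb
      exact hvisible l (by simp [hlA, hlb]) hlp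
    have hb' : b.image Label.bar = B.filter p := by
      ext l
      refine ⟨fun hl => Finset.mem_filter.2 ⟨hbB hl, ?_⟩, fun hl => ?_⟩
      · obtain ⟨m, hm, rfl⟩ := Finset.mem_image.1 hl
        exact (hp m).2 (hbp m hm)
      · obtain ⟨hlB, hlp⟩ := Finset.mem_filter.1 hl
        by_contra hlb
        exact hvisible l (by simp [hlB, hlb]) hlp
    rw [← hb, ← hb', Finset.filter_not, Finset.filter_not, ← hb, ← hb']
    exact ⟨rfl, rfl⟩
  · rintro ⟨hsync, rfl⟩
    refine ⟨A.filter p, Finset.filter_subset _ _, hsync ▸ Finset.filter_subset _ _, ?_, ?_, ?_⟩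
    · rwa [hsync, ← Finset.filter_not, ← Finset.filter_not]
    · rw [hsync, ← Finset.filter_not, ← Finset.filter_not]
    · intro l hl
      rcases Finset.mem_union.1 hl with hl | hl <;> exact (Finset.mem_filter.1 hl).2

lemma move_restrict_par_iff {g : Bool} {P Q : Proc} {p : Label → Prop}
    (hp : ∀ l, p l.bar ↔ p l) {e : Act} {S : Proc} :
    Move g ((P.par Q).restrict {l | p l}) e S ↔
      ∃ gP gQ aP aQ P' Q', Move gP P aP P' ∧ Move gQ Q aQ Q' ∧ g = (gP || gQ) ∧
        (∃ b : Act, b ⊆ aP ∧ b.image Label.bar ⊆ aQ ∧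
          Disjoint (aP \ b) (aQ \ b.image Label.bar) ∧
          e = (aP \ b) ∪ (aQ \ b.image Label.bar) ∧ ∀ l ∈ e, ¬p l) ∧
        S = (P'.par Q').restrict {l | p l} := by
  simp only [move_restrict_iff, move_par_iff]
  constructor
  · rintro ⟨_, ⟨gP, gQ, aP, aQ, P', Q', hP, hQ, rfl, ⟨b, hb⟩, rfl⟩, hvisible, rfl⟩
    exact ⟨gP, gQ, aP, aQ, P', Q', hP, hQ, rfl, ⟨b, hb.1, hb.2.1, hb.2.2.1, hb.2.2.2,
      fun l hl => (hvisible l hl).1⟩, rfl⟩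
  · rintro ⟨gP, gQ, aP, aQ, P', Q', hP, hQ, rfl, ⟨b, hbP, hbQ, hdisj, he, hvisible⟩, rfl⟩
    exact ⟨_, ⟨gP, gQ, aP, aQ, P', Q', hP, hQ, rfl, ⟨b, hbP, hbQ, hdisj, he⟩, rfl⟩,
      fun l hl => ⟨hvisible l hl, mt (hp l).1 (hvisible l hl)⟩, rfl⟩

/-! ## The renamings on names -/

def phi12Name (n : ℕ) : ℕ := 3 * (n / 2) + n % 2

def phi23Name (n : ℕ) : ℕ := 3 * (n / 2) + n % 2 + 1

def phi13InvName (n : ℕ) : ℕ := 2 * (n / 3) + n % 3 / 2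

def rName (n : ℕ) : ℕ := 2 * n + 1

lemma phi12Name_injective : phi12Name.Injective := fun m n h => by
  simp only [phi12Name] at h; omega

@[simp] lemma onAction_phi12 (a : Act) : phi12.onAction a = a.image (Label.map phi12Name) :=
  Renaming.onAction_ofNameFun fun _ _ => by
    simp only [phi12Name]; split_ifs <;> congr 1 <;> omega

@[simp] lemma onAction_phi23 (a : Act) : phi23.onAction a = a.image (Label.map phi23Name) :=
  Renaming.onAction_ofNameFun fun _ _ => by
    simp only [phi23Name]; split_ifs <;> congr 1 <;> omega

@[simp] lemma onAction_rRen (a : Act) : rRen.onAction a = a.image (Label.map rName) :=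
  Renaming.onAction_ofNameFun fun _ _ => rfl

@[simp] lemma isSome_phi12 (l : Label) : (phi12.toFun l).isSome := by cases l <;> rfl

@[simp] lemma isSome_phi23 (l : Label) : (phi23.toFun l).isSome := by cases l <;> rfl

@[simp] lemma isSome_rRen (l : Label) : (rRen.toFun l).isSome := by cases l <;> rfl

lemma onAction_lInv {a : Act} (h : ∀ l ∈ a, l.name % 2 = 0) :
    lInv.onAction a = a.image (Label.map (· / 2)) :=
  Renaming.onAction_ofNameFun fun l hl => by simp [h l hl]

lemma isSome_lInv {l : Label} (h : l.name % 2 = 0) : (lInv.toFun l).isSome := by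
  simp [lInv, Renaming.isSome_ofNameFun, h]

lemma onAction_phi13Inv {a : Act} (h : ∀ l ∈ a, l.name % 3 ≠ 1) :
    phi13Inv.onAction a = a.image (Label.map phi13InvName) :=
  Renaming.onAction_ofNameFun fun l hl => by
    have := h l hl
    simp only [phi13InvName]; split_ifs <;> congr 1 <;> omega

lemma isSome_phi13Inv {l : Label} (h : l.name % 3 ≠ 1) : (phi13Inv.toFun l).isSome := by
  simp only [phi13Inv, Renaming.isSome_ofNameFun]; split_ifs <;> first | rfl | omega

/-! ## Moves of composition and right application -/

lemma comp_sync_iff {aP aQ e : Act} :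
    (∃ b : Act, b ⊆ aP.image (Label.map phi12Name) ∧
        b.image Label.bar ⊆ aQ.image (Label.map phi23Name) ∧
        Disjoint (aP.image (Label.map phi12Name) \ b)
          (aQ.image (Label.map phi23Name) \ b.image Label.bar) ∧
        e = (aP.image (Label.map phi12Name) \ b) ∪
          (aQ.image (Label.map phi23Name) \ b.image Label.bar) ∧
        ∀ l ∈ e, ¬l.name % 3 = 1) ↔
      (aP.odds.image (Label.map phi12Name)).image Label.bar =
          aQ.evens.image (Label.map phi23Name) ∧
        e = aP.evens.image (Label.map phi12Name) ∪ aQ.odds.image (Label.map phi23Name) := by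
  rw [exists_sync_iff (p := (·.name % 3 = 1)) (by simp)]
  · rw [Act.filter_image_map (q := (·.name % 2 = 1)) ?_,
      Act.filter_image_map (q := (·.name % 2 = 0)) ?_,
      Act.filter_image_map (q := (·.name % 2 = 0)) ?_,
      Act.filter_image_map (q := (·.name % 2 = 1)) ?_]
    · rfl
    all_goals intro l; simp only [Label.name_map, phi12Name, phi23Name]; omega
  · simp only [Finset.mem_image]
    rintro _ ⟨x, -, rfl⟩ ⟨y, -, hxy⟩
    have := congrArg Label.name hxy
    simp only [Label.name_map, Label.name_bar, phi12Name, phi23Name] at this ⊢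
    omega
  · simp only [Finset.disjoint_left, Finset.mem_filter, Finset.mem_image]
    rintro _ ⟨⟨x, -, rfl⟩, hx⟩ ⟨⟨y, -, hxy⟩, hy⟩
    have := congrArg Label.name hxy
    simp only [Label.name_map, phi12Name, phi23Name] at this hx hy
    omega

lemma name_mod_three_ne_one_of_mem_union {aP aQ : Act} :
    ∀ l ∈ aP.evens.image (Label.map phi12Name) ∪ aQ.odds.image (Label.map phi23Name),
      l.name % 3 ≠ 1 := by
  simp only [Finset.mem_union, Finset.mem_image, Act.mem_evens, Act.mem_odds]
  rintro _ (⟨l, ⟨-, hl⟩, rfl⟩ | ⟨l, ⟨-, hl⟩, rfl⟩) <;>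
    simp only [Label.name_map, phi12Name, phi23Name] <;> omega

lemma onAction_phi13Inv_comp (aP aQ : Act) :
    phi13Inv.onAction
        (aP.evens.image (Label.map phi12Name) ∪ aQ.odds.image (Label.map phi23Name)) =
      aP.evens ∪ aQ.odds := by
  rw [onAction_phi13Inv name_mod_three_ne_one_of_mem_union, Finset.image_union, Finset.image_image,
    Finset.image_image, Label.map_comp_map, Label.map_comp_map]
  congr 1 <;> refine Act.image_map_eq_self fun l hl => ?_ <;>
    simp only [Act.mem_evens, Act.mem_odds] at hl <;>
    simp only [Function.comp, phi13InvName, phi12Name, phi23Name] <;> omega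

lemma move_comp_iff {g : Bool} {P Q : Proc} {e : Act} {S : Proc} :
    Move g (comp P Q) e S ↔
      ∃ gP gQ aP aQ P' Q', Move gP P aP P' ∧ Move gQ Q aQ Q' ∧ g = (gP || gQ) ∧
        (aP.odds.image (Label.map phi12Name)).image Label.bar =
          aQ.evens.image (Label.map phi23Name) ∧
        e = aP.evens ∪ aQ.odds ∧ S = comp P' Q' := by
  simp only [comp, move_rename_iff, Lab2, move_restrict_par_iff (p := (·.name % 3 = 1)) (by simp),
    onAction_phi12, onAction_phi23, isSome_phi12, isSome_phi23, implies_true, true_and]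
  constructor
  · rintro ⟨_, _, ⟨gP, gQ, _, _, _, _, ⟨aP, P', hP, rfl, rfl⟩, ⟨aQ, Q', hQ, rfl, rfl⟩, rfl,
      hlink, rfl⟩, -, rfl, rfl⟩
    obtain ⟨hsync, rfl⟩ := comp_sync_iff.1 hlink
    exact ⟨gP, gQ, aP, aQ, P', Q', hP, hQ, rfl, hsync, onAction_phi13Inv_comp aP aQ, rfl⟩
  · rintro ⟨gP, gQ, aP, aQ, P', Q', hP, hQ, rfl, hsync, rfl, rfl⟩
    refine ⟨_, _, ⟨gP, gQ, _, _, _, _, ⟨aP, P', hP, rfl, rfl⟩, ⟨aQ, Q', hQ, rfl, rfl⟩, rfl,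
      comp_sync_iff.2 ⟨hsync, rfl⟩, rfl⟩, ?_, (onAction_phi13Inv_comp aP aQ).symm, rfl⟩
    exact fun l hl => isSome_phi13Inv (name_mod_three_ne_one_of_mem_union l hl)

lemma rapp_sync_iff {aX aY e : Act} :
    (∃ b : Act, b ⊆ aX ∧ b.image Label.bar ⊆ aY.image (Label.map rName) ∧
        Disjoint (aX \ b) (aY.image (Label.map rName) \ b.image Label.bar) ∧
        e = (aX \ b) ∪ (aY.image (Label.map rName) \ b.image Label.bar) ∧
        ∀ l ∈ e, ¬l.name % 2 = 1) ↔
      aX.odds.image Label.bar = aY.image (Label.map rName) ∧ e = aX.evens := by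
  have hodd : ∀ l ∈ aY.image (Label.map rName), l.name % 2 = 1 := by
    simp only [Finset.mem_image]
    rintro _ ⟨l, -, rfl⟩
    simp only [Label.name_map, rName]; omega
  have hinvisible : (aY.image (Label.map rName)).filter (¬·.name % 2 = 1) = ∅ :=
    Finset.filter_false_of_mem fun l hl => not_not.2 (hodd l hl)
  rw [exists_sync_iff (p := (·.name % 2 = 1)) (by simp) (fun l _ h => by simpa using hodd _ h)
    (by rw [hinvisible]; exact Finset.disjoint_empty_right _),
    Finset.filter_true_of_mem hodd, hinvisible, Finset.union_empty]
  exact and_congr Iff.rfl (Eq.congr_right (Finset.filter_congr fun l _ => by omega))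

lemma move_rapp_iff {g : Bool} {X Y : Proc} {e : Act} {S : Proc} :
    Move g (rapp X Y) e S ↔
      ∃ gX gY aX aY X' Y', Move gX X aX X' ∧ Move gY Y aY Y' ∧ g = (gX || gY) ∧
        aX.odds.image Label.bar = aY.image (Label.map rName) ∧
        e = aX.evens.image (Label.map (· / 2)) ∧ S = rapp X' Y' := by
  have hlInv : ∀ {a : Act}, lInv.onAction a.evens = a.evens.image (Label.map (· / 2)) :=
    onAction_lInv fun l hl => (Act.mem_evens.1 hl).2
  simp only [rapp, move_rename_iff, LabR, move_restrict_par_iff (p := (·.name % 2 = 1)) (by simp),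
    onAction_rRen, isSome_rRen, implies_true, true_and]
  constructor
  · rintro ⟨_, _, ⟨gX, gY, aX, _, X', _, hX, ⟨aY, Y', hY, rfl, rfl⟩, rfl, hlink, rfl⟩, -, rfl,
      rfl⟩
    obtain ⟨hsync, rfl⟩ := rapp_sync_iff.1 hlink
    exact ⟨gX, gY, aX, aY, X', Y', hX, hY, rfl, hsync, hlInv, rfl⟩
  · rintro ⟨gX, gY, aX, aY, X', Y', hX, hY, rfl, hsync, rfl, rfl⟩
    exact ⟨_, _, ⟨gX, gY, aX, _, X', _, hX, ⟨aY, Y', hY, rfl, rfl⟩, rfl,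
      rapp_sync_iff.2 ⟨hsync, rfl⟩, rfl⟩, fun l hl => isSome_lInv (Act.mem_evens.1 hl).2,
      hlInv.symm, rfl⟩

/-! ## Both sides make the same moves -/

/-- `φ₁₂ ∘ r ∘ l⁻¹ = φ₂₃` on `𝒩_l`: the synchronisation of `P` with `Q` inside `P ; Q` is the
one inside `(P | (Q | R⟩⟩`. -/
lemma comp_sync_iff_rapp_sync {aP aQ : Act} :
    (aP.odds.image (Label.map phi12Name)).image Label.bar =
        aQ.evens.image (Label.map phi23Name) ↔
      aP.odds.image Label.bar = (aQ.evens.image (Label.map (· / 2))).image (Label.map rName) := by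
  refine Iff.trans ?_ (Finset.image_injective (Label.map_injective phi12Name_injective)).eq_iff
  simp only [Finset.image_image, Label.bar_comp_map, Label.map_comp_map]
  refine Eq.congr_right (Finset.image_congr fun l hl => Label.map_congr ?_)
  have := (Act.mem_evens.1 hl).2
  simp only [Function.comp, phi12Name, phi23Name, rName]
  omega

/-- `P`, `Q`, `R` move to `P'`, `Q'`, `R'` (`g`: not all of them idle), the right interface of
each synchronising with the left interface of the next and `e` being shown on the left interface
of `P`. -/
def JointMove (g : Bool) (P Q R : Proc) (e : Act) (P' Q' R' : Proc) : Prop :=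
  ∃ gP gQ gR aP aQ aR, Move gP P aP P' ∧ Move gQ Q aQ Q' ∧ Move gR R aR R' ∧
    g = (gP || gQ || gR) ∧
    aP.odds.image Label.bar = (aQ.evens.image (Label.map (· / 2))).image (Label.map rName) ∧
    aQ.odds.image Label.bar = aR.image (Label.map rName) ∧
    e = aP.evens.image (Label.map (· / 2))

lemma move_rapp_comp_iff {g : Bool} {P Q R : Proc} {e : Act} {S : Proc} :
    Move g (rapp (comp P Q) R) e S ↔
      ∃ P' Q' R', JointMove g P Q R e P' Q' R' ∧ S = rapp (comp P' Q') R' := by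
  simp only [move_rapp_iff, move_comp_iff, JointMove]
  constructor
  · rintro ⟨_, gR, _, aR, _, R', ⟨gP, gQ, aP, aQ, P', Q', hP, hQ, rfl, hPQ, rfl, rfl⟩, hR, rfl,
      hQR, rfl, rfl⟩
    exact ⟨P', Q', R', ⟨gP, gQ, gR, aP, aQ, aR, hP, hQ, hR, rfl, comp_sync_iff_rapp_sync.1 hPQ,
      by simpa using hQR, by simp⟩, rfl⟩
  · rintro ⟨P', Q', R', ⟨gP, gQ, gR, aP, aQ, aR, hP, hQ, hR, rfl, hPQ, hQR, rfl⟩, rfl⟩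
    exact ⟨_, gR, _, aR, _, R', ⟨gP, gQ, aP, aQ, P', Q', hP, hQ, rfl,
      comp_sync_iff_rapp_sync.2 hPQ, rfl, rfl⟩, hR, rfl, by simpa using hQR, by simp, rfl⟩

lemma move_rapp_rapp_iff {g : Bool} {P Q R : Proc} {e : Act} {S : Proc} :
    Move g (rapp P (rapp Q R)) e S ↔
      ∃ P' Q' R', JointMove g P Q R e P' Q' R' ∧ S = rapp P' (rapp Q' R') := by
  simp only [move_rapp_iff, JointMove]
  constructor
  · rintro ⟨gP, _, aP, _, P', _, hP, ⟨gQ, gR, aQ, aR, Q', R', hQ, hR, rfl, hQR, rfl, rfl⟩, rfl,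
      hPQ, rfl, rfl⟩
    exact ⟨P', Q', R', ⟨gP, gQ, gR, aP, aQ, aR, hP, hQ, hR, (Bool.or_assoc _ _ _).symm, hPQ,
      hQR, rfl⟩, rfl⟩
  · rintro ⟨P', Q', R', ⟨gP, gQ, gR, aP, aQ, aR, hP, hQ, hR, rfl, hPQ, hQR, rfl⟩, rfl⟩
    exact ⟨gP, _, aP, _, P', _, hP, ⟨gQ, gR, aQ, aR, Q', R', hQ, hR, rfl, hQR, rfl, rfl⟩,
      Bool.or_assoc _ _ _, hPQ, rfl, rfl⟩

/-- **Right application is compatible with composition**: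
`((P ; Q) | R⟩ ≈_f (P | (Q | R⟩⟩`. -/
theorem rapp_comp_failures (P Q R : Proc) :
    FailEq (rapp (comp P Q) R) (rapp P (rapp Q R))  := by
  refine failEq_of_isStrongSim
    (R := fun X Y => ∃ P Q R, X = rapp (comp P Q) R ∧ Y = rapp P (rapp Q R)) ?_ ?_
    ⟨P, Q, R, rfl, rfl⟩
  · rintro _ _ ⟨P, Q, R, rfl, rfl⟩ e S hS
    obtain ⟨P', Q', R', hPQR, rfl⟩ := (move_rapp_comp_iff (g := true)).1 hS
    exact ⟨_, move_rapp_rapp_iff.2 ⟨P', Q', R', hPQR, rfl⟩, P', Q', R', rfl, rfl⟩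
  · rintro _ _ ⟨P, Q, R, rfl, rfl⟩ e S hS
    obtain ⟨P', Q', R', hPQR, rfl⟩ := (move_rapp_rapp_iff (g := true)).1 hS
    exact ⟨_, move_rapp_comp_iff.2 ⟨P', Q', R', hPQR, rfl⟩, P', Q', R', rfl, rfl⟩
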